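/- arXiv:2404.18618 — 2 statements merged into one kernel-verified Lean document; each statement's English description precedes it below -/
import Mathlib

section
/- Let A be an abelian group, P a set of primes, and let s : ℕ → P × ℕ be a bijection onto P × ℕ. Define a sequential diagram A_0 → A_1 → ⋯ where each A_n = A and the transition map A_n → A_{n+1} is multiplication by the prime pr₁(s(n)). Then for every prime p ∈ P, multiplication by p on the colimit colim_n A_n is an isomorphism (i.e. every p ∈ P is invertible on the colimit). -/
universe u
open CategoryTheory CategoryTheory.Limits

/-- The sequential diagram `A → A → A → ⋯` whose `n`-th transition map is
multiplication by the prime `(s n).1`. -/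
noncomputable def multDiagram (A : AddCommGrpCat.{u}) (P : Set ℕ) (s : ℕ ≃ P × ℕ) :
    ℕ ⥤ AddCommGrpCat.{u} :=
  CategoryTheory.Functor.ofSequence
    (X := fun _ => A)
    (fun n => AddCommGrpCat.ofHom ((((s n).1 : ℕ) • AddMonoidHom.id A)))

/-! An element of the colimit represented at stage `n` can be pushed to any later stage `m + 1`
whose transition map is multiplication by `p`, which exhibits it as `p` times an element of the
colimit; and if `p` kills it in the colimit, then `p` already kills its image at some stage, so
the next multiplication by `p` along the way kills the element itself. Since `p` occurs as
`pr₁ (s m)` for infinitely many `m`, such stages exist beyond every `n`. -/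

namespace AddCommGrpCat

variable {J : Type*} [Category J] (F : J ⥤ AddCommGrpCat.{u}) [HasColimit F]
  [PreservesColimit F (forget AddCommGrpCat.{u})] (k : ℕ)

theorem nsmul_surjective_colimit
    (hF : ∀ j, ∃ (j' : J) (f : j ⟶ j') (g : F.obj j →+ F.obj j'), ∀ x, F.map f x = k • g x) :
    Function.Surjective (fun x : (colimit F : AddCommGrpCat.{u}) => k • x) := by
  intro x
  obtain ⟨j, a, rfl⟩ := Concrete.colimit_exists_rep F x
  obtain ⟨j', f, g, hfg⟩ := hF j
  refine ⟨colimit.ι F j' (g a), ?_⟩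
  dsimp only
  rw [← map_nsmul, ← hfg, ← ConcreteCategory.comp_apply, colimit.w]

theorem nsmul_injective_colimit [IsFiltered J]
    (hF : ∀ j, ∃ (j' : J) (f : j ⟶ j') (g : F.obj j →+ F.obj j'), ∀ x, F.map f x = k • g x) :
    Function.Injective (fun x : (colimit F : AddCommGrpCat.{u}) => k • x) := by
  refine (injective_iff_map_eq_zero
    (nsmulAddMonoidHom (α := (colimit F : AddCommGrpCat.{u})) k)).2 fun x hx => ?_
  obtain ⟨j, a, rfl⟩ := Concrete.colimit_exists_rep F x
  have hka : colimit.ι F j (k • a) = colimit.ι F j 0 := by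
    simpa [map_nsmul] using hx
  obtain ⟨j₁, f₁, f₁', hf₁⟩ := Concrete.colimit_exists_of_rep_eq F _ _ hka
  obtain ⟨j₂, f₂, g, hfg⟩ := hF j₁
  calc colimit.ι F j a = colimit.ι F j₂ (F.map f₂ (F.map f₁ a)) := by
        rw [← ConcreteCategory.comp_apply, ← ConcreteCategory.comp_apply, ← Functor.map_comp_assoc,
          colimit.w]
    _ = colimit.ι F j₂ (g (F.map f₁ (k • a))) := by
        rw [hfg, map_nsmul (F.map f₁).hom, map_nsmul g]
    _ = 0 := by rw [hf₁, map_zero, map_zero, map_zero]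

theorem nsmul_bijective_colimit_of_nat (F : ℕ ⥤ AddCommGrpCat.{u}) (k : ℕ)
    (hF : ∀ n, ∃ m ≥ n, ∃ g : F.obj m →+ F.obj (m + 1),
      ∀ x, F.map (homOfLE m.le_succ) x = k • g x) :
    Function.Bijective (fun x : (colimit F : AddCommGrpCat.{u}) => k • x) := by
  have : PreservesFilteredColimitsOfSize.{0, 0} (forget AddCommGrpCat.{u}) :=
    preservesSmallestFilteredColimits_of_preservesFilteredColimits _
  have hF' : ∀ n, ∃ (n' : ℕ) (i : n ⟶ n') (g : F.obj n →+ F.obj n'),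
      ∀ x, F.map i x = k • g x := by
    intro n
    obtain ⟨m, hnm, g, hg⟩ := hF n
    refine ⟨m + 1, homOfLE (hnm.trans m.le_succ), g.comp (F.map (homOfLE hnm)).hom, fun x => ?_⟩
    rw [AddMonoidHom.comp_apply, ← hg, ← ConcreteCategory.comp_apply, ← Functor.map_comp]
    rfl
  exact ⟨nsmul_injective_colimit F k hF', nsmul_surjective_colimit F k hF'⟩

end AddCommGrpCat

theorem Equiv.exists_ge_fst_eq {α β : Type*} [Infinite β] (e : ℕ ≃ α × β) (a : α) (n : ℕ) :
    ∃ m ≥ n, (e m).1 = a := by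
  have hinj : Function.Injective (fun b => e.symm (a, b)) :=
    e.symm.injective.comp (Prod.mk_right_injective a)
  obtain ⟨_, ⟨b, rfl⟩, hb⟩ := (Set.infinite_range_of_injective hinj).exists_gt n
  exact ⟨e.symm (a, b), hb.le, by simp⟩

theorem stmt0_general (A : AddCommGrpCat.{u}) (P : Set ℕ)
    (s : ℕ ≃ P × ℕ) (p : ℕ) (hp : p ∈ P) :
    Function.Bijective (fun x : (colimit (multDiagram A P s) : AddCommGrpCat.{u}) => p • x) := by
  refine AddCommGrpCat.nsmul_bijective_colimit_of_nat _ p fun n => ?_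
  obtain ⟨m, hnm, hm⟩ := s.exists_ge_fst_eq ⟨p, hp⟩ n
  refine ⟨m, hnm, AddMonoidHom.id A, fun x => ?_⟩
  rw [show (multDiagram A P s).map (homOfLE m.le_succ) = _ from
    Functor.ofSequence_map_homOfLE_succ _ m, hm]
  rfl

/-- For an abelian group `A`, a set of primes `P` and a bijection
`s : ℕ ≃ P × ℕ`, every prime `p ∈ P` acts invertibly on the colimit of the sequential
diagram whose `n`-th transition map is multiplication by `pr₁ (s n)`. -/
theorem stmt0 (A : AddCommGrpCat.{u}) (P : Set ℕ) (hP : ∀ p ∈ P, p.Prime)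
    (s : ℕ ≃ P × ℕ) (p : ℕ) (hp : p ∈ P) :
    Function.Bijective (fun x : (colimit (multDiagram A P s) : AddCommGrpCat.{u}) => p • x) :=
  stmt0_general A P s p hp
end

section
/- Let D be a stable category with a separated t-structure compatible with filtered colimits, and let L_R be the R-localization on D (for R = ℤ[P⁻¹]) which commutes with the homotopy object functors π_n. Then a morphism f : E → F in D is an R-local equivalence if and only if π_n(f) is an R-local equivalence in the heart for all n ∈ ℤ; and an object E is R-local if and only if each π_n(E) is R-local in the heart. -/
open CategoryTheory

/-- Let `D` be a stable category with a separated t-structure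
compatible with filtered colimits, with heart `A` and homotopy object functors
`π n : D ⥤ A`.  Separatedness (in the stable setting) means that the functors `π n`
jointly detect isomorphisms (`hsep`).  Let `L` be the `R`-localization on `D` and `LA`
the `R`-localization on the heart; `L` commutes with the `π n` compatibly with the
units (`e`, `he`).  Then a morphism `f` is an `R`-local equivalence (i.e. `L f` is an
isomorphism) iff each `π n f` is an `R`-local equivalence in the heart, and an object
`E` is `R`-local (i.e. its unit is an isomorphism) iff each `π n E` is `R`-local in the
heart. -/
theorem stmt14 {D : Type u₁} {A : Type u₂} [Category.{v₁} D] [Category.{v₂} A]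
    (π : ℤ → D ⥤ A)
    (hsep : ∀ {X Y : D} (f : X ⟶ Y), (∀ n, IsIso ((π n).map f)) → IsIso f)
    (L : D ⥤ D) (α : 𝟭 D ⟶ L) (LA : A ⥤ A) (αA : 𝟭 A ⟶ LA)
    (e : ∀ n : ℤ, L ⋙ π n ≅ π n ⋙ LA)
    (he : ∀ (n : ℤ) (X : D),
      (π n).map (α.app X) ≫ (e n).hom.app X = αA.app ((π n).obj X)) :
    (∀ {X Y : D} (f : X ⟶ Y),
        IsIso (L.map f) ↔ ∀ n, IsIso (LA.map ((π n).map f))) ∧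
    (∀ E : D, IsIso (α.app E) ↔ ∀ n, IsIso (αA.app ((π n).obj E))) := by
  have key : ∀ {X Y : D} (f : X ⟶ Y) (n : ℤ),
      (π n).map (L.map f) = (e n).hom.app X ≫ LA.map ((π n).map f) ≫ (e n).inv.app Y := by
    intro X Y f n
    have := (e n).hom.naturality f
    simp only [Functor.comp_map] at this
    rw [← Category.assoc, ← this]
    simp
  constructor
  · intro X Y f
    constructor
    · intro h n
      have h2 : LA.map ((π n).map f) =
          (e n).inv.app X ≫ (π n).map (L.map f) ≫ (e n).hom.app Y := by
        rw [key f n]; simp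
      rw [h2]
      infer_instance
    · intro h
      apply hsep
      intro n
      rw [key f n]
      have := h n
      infer_instance
  · intro E
    have heq : ∀ n, (π n).map (α.app E) = αA.app ((π n).obj E) ≫ (e n).inv.app E := by
      intro n
      rw [← he n E]
      simp
    constructor
    · intro h n
      have h1 : IsIso ((π n).map (α.app E)) := inferInstance
      rw [heq n] at h1
      exact IsIso.of_isIso_comp_right _ ((e n).inv.app E)
    · intro h
      apply hsep
      intro n
      rw [heq n]
      have := h n
      infer_instance
end
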